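/- arXiv:2401.10103 — 2 statements merged into one kernel-verified Lean document; each statement's English description precedes it below -/
import Mathlib

section
/- Let X be a real normed space partially ordered by a nontrivial pointed convex cone C, and let A ⊆ X be a weakly compact subset. Assume that C is closed and that (C, C_α) has the strict separation property for every 0 < α < 1. If 0 ∈ Min(A, C), then for every 0 < ε < 1 there exist a natural number n_ε and a bounded base B(ε) of C such that 1/n_ε < δ_{B(ε)}, the pair (C, C_{(B(ε),1/n_ε)}) has the strict separation property, and A ∩ (−C_{(B(ε),1/n_ε)}) ⊆ A ∩ εB_X. -/
open Set Metric Pointwise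

namespace HenigPaper

variable {X : Type*} [NormedAddCommGroup X] [NormedSpace ℝ X]

/-- `C` is a cone: closed under multiplication by nonnegative scalars. -/
def IsCone (C : Set X) : Prop :=
  ∀ ⦃l : ℝ⦄, 0 ≤ l → ∀ ⦃x⦄, x ∈ C → l • x ∈ C

/-- `C` is a nontrivial cone: `{0} ⊊ C ⊊ X`. -/
def NontrivialCone (C : Set X) : Prop :=
  IsCone C ∧ ({(0 : X)} : Set X) ⊂ C ∧ C ≠ Set.univ

/-- A cone is pointed if `(-C) ∩ C = {0}`. -/
def PointedCone' (C : Set X) : Prop := (-C) ∩ C = ({(0 : X)} : Set X)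

/-- Convexity of a cone in the sense `C + C = C`. -/
def ConeConvex (C : Set X) : Prop := C + C = C

/-- The strict separation property (SSP) for the pair of cones `(C, K)`. -/
def SSP (C K : Set X) : Prop :=
  (0 : X) ∉ closure (convexHull ℝ (C ∩ sphere (0 : X) 1) -
    convexHull ℝ ((frontier K ∩ sphere (0 : X) 1) ∪ {(0 : X)}))

/-- The Bishop–Phelps cone `C(f, α) = {x : f x ≥ α ‖x‖}`. -/
def BPCone (f : X →L[ℝ] ℝ) (α : ℝ) : Set X := {x : X | α * ‖x‖ ≤ f x}

/-- The sublevel set `S(f, α) = {x : f x + α ‖x‖ ≤ 0}`. -/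
def Ssub (f : X →L[ℝ] ℝ) (α : ℝ) : Set X := {x : X | f x + α * ‖x‖ ≤ 0}

/-- `f ∈ C^#`: strictly positive functionals on `C`. -/
def StrictlyPos (C : Set X) (f : X →L[ℝ] ℝ) : Prop :=
  ∀ x ∈ C, x ≠ 0 → 0 < f x

/-- `(f, α) ∈ C^{a*}`: the augmented dual cone. -/
def MemAugDual (C : Set X) (f : X →L[ℝ] ℝ) (α : ℝ) : Prop :=
  StrictlyPos C f ∧ 0 ≤ α ∧ ∀ x ∈ C, α * ‖x‖ ≤ f x

/-- `(f, α) ∈ C^{a#}_+`. -/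
def MemAugDualSharpPlus (C : Set X) (f : X →L[ℝ] ℝ) (α : ℝ) : Prop :=
  StrictlyPos C f ∧ 0 < α ∧ ∀ x ∈ C, x ≠ 0 → α * ‖x‖ < f x

/-- `B` is a base for the cone `C`. -/
def IsBase (C B : Set X) : Prop :=
  B.Nonempty ∧ Convex ℝ B ∧ B ⊆ C ∧ (0 : X) ∉ closure B ∧
    ∀ x ∈ C, x ≠ (0 : X) → ∃! p : ℝ × X, 0 < p.1 ∧ p.2 ∈ B ∧ x = p.1 • p.2

/-- The cone `C` has a bounded base. -/
def HasBoundedBase (C : Set X) : Prop :=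
  ∃ B : Set X, IsBase C B ∧ Bornology.IsBounded B

/-- The cone generated by a set `A`. -/
def coneGen (A : Set X) : Set X := {y : X | ∃ l : ℝ, 0 ≤ l ∧ ∃ a ∈ A, y = l • a}

/-- The `ε`-conic neighbourhood `C_ε` of a cone `C`. -/
def epsCone (C : Set X) (ε : ℝ) : Set X :=
  coneGen {x : X | infDist x (C ∩ sphere (0 : X) 1) ≤ ε}

/-- `δ_B = inf {‖b‖ : b ∈ B}`. -/
noncomputable def deltaB (B : Set X) : ℝ := sInf ((fun b => ‖b‖) '' B)

/-- The Henig dilating cone `C_{(B,ε)}`. -/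
def henigCone (B : Set X) (ε : ℝ) : Set X :=
  coneGen {x : X | infDist x B ≤ ε}

/-- The set of efficient (Pareto minimal) points of `A` with respect to the cone `C`. -/
def MinSet (A C : Set X) : Set X :=
  {x ∈ A | (A - ({x} : Set X)) ∩ (-C) = ({(0 : X)} : Set X)}

/-- The set of Henig global proper efficient points of `A` with respect to `C`. -/
def GHe (A C : Set X) : Set X :=
  {x : X | ∃ K : Set X, IsCone K ∧ ConeConvex K ∧ C \ {(0 : X)} ⊆ interior K ∧
    x ∈ MinSet A K}

/-- A subset of `X` is weakly compact if it is compact in the weak topology. -/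
def WeaklyCompact (A : Set X) : Prop :=
  IsCompact ((toWeakSpace ℝ X) '' A)

end HenigPaper

open HenigPaper

variable {X : Type*} [NormedAddCommGroup X] [NormedSpace ℝ X]

/-!
A single instance of the SSP already yields a functional `f` with `u ‖x‖ ≤ f x` on `C`, and
`B = C ∩ {f = 1}` is a bounded base with `δ_B ≥ 1 / ‖f‖`.

For `α < δ u` the punctured cone `C_α \ {0}` lies in the interior of `C_{(B,δ)}`, and this lets
the SSP pass from `(C, C_α)` to `(C, C_{(B,δ)})`: a unit boundary direction `q` of the Henig cone
lies outside `C_α`, so the segment from `q` to a point of `C ∩ S_X` crosses the boundary of `C_α`,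
where the functional separating `(C, C_α)` is controlled, and this control transfers to `q`.

If no Henig cone worked, then for every `δ` some `x ∈ A ∩ -C_{(B,δ)}` would have `‖x‖ > ε`,
hence `f x ≤ -κ` for a fixed `κ > 0`. These conditions cut out a decreasing family of closed
convex, hence weakly closed, sets, so weak compactness of `A` gives a common point `x`. Then
`-x ∈ ⋂_δ closure C_{(B,δ)} = C`, and `0 ∈ Min(A, C)` forces `x = 0`, contradicting `f x ≤ -κ`.
-/

theorem IsPreconnected.inter_frontier_nonempty {α : Type*} [TopologicalSpace α] {s t : Set α}
    (hs : IsPreconnected s) (hst : (s ∩ t).Nonempty) (hsdt : (s \ t).Nonempty) :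
    (s ∩ frontier t).Nonempty := by
  have := isPreconnected_iff_preconnectedSpace.1 hs
  obtain ⟨x, hx⟩ := hst
  obtain ⟨y, hy⟩ := hsdt
  obtain ⟨z, hz⟩ : (frontier (Subtype.val ⁻¹' t : Set s)).Nonempty := nonempty_frontier_iff.2
    ⟨⟨⟨x, hx.1⟩, hx.2⟩, ne_univ_iff_exists_notMem _ |>.2 ⟨⟨y, hy.1⟩, hy.2⟩⟩
  exact ⟨z, z.2, continuous_subtype_val.frontier_preimage_subset t hz⟩

theorem le_mul_infDist {E : Type*} [PseudoMetricSpace E] {s : Set E} (hs : s.Nonempty) {K a : ℝ}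
    (hK : 0 ≤ K) {x : E} (h : ∀ y ∈ s, a ≤ K * dist x y) : a ≤ K * infDist x s := by
  rw [infDist_eq_iInf, Real.mul_iInf_of_nonneg hK]
  have := hs.to_subtype
  exact le_ciInf fun y => h y y.2

theorem norm_le_add_infDist {E : Type*} [SeminormedAddCommGroup E] {B : Set E} {R : ℝ}
    (hB : B.Nonempty) (hBR : ∀ b ∈ B, ‖b‖ ≤ R) (w : E) : ‖w‖ ≤ R + infDist w B := by
  have := le_mul_infDist hB zero_le_one (a := ‖w‖ - R) (x := w) fun b hb => by
    rw [one_mul, dist_eq_norm]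
    linarith [norm_le_norm_add_norm_sub' w b, hBR b hb]
  linarith

open Filter Topology

namespace HenigPaper

section Cones

theorem subset_coneGen (A : Set X) : A ⊆ coneGen A :=
  fun x hx => ⟨1, zero_le_one, x, hx, (one_smul ℝ x).symm⟩

theorem coneGen_mono {A A' : Set X} (h : A ⊆ A') : coneGen A ⊆ coneGen A' := by
  rintro - ⟨l, hl, a, ha, rfl⟩
  exact ⟨l, hl, a, h ha, rfl⟩

theorem isCone_coneGen (A : Set X) : IsCone (coneGen A) := by
  rintro l hl - ⟨m, hm, a, ha, rfl⟩
  exact ⟨l * m, mul_nonneg hl hm, a, ha, (mul_smul l m a).symm⟩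

theorem convex_coneGen {A : Set X} (hA : Convex ℝ A) : Convex ℝ (coneGen A) := by
  rintro - ⟨l, hl, a, ha, rfl⟩ - ⟨m, hm, b, hb, rfl⟩ s t hs ht hst
  have hsl : 0 ≤ s * l := mul_nonneg hs hl
  have htm : 0 ≤ t * m := mul_nonneg ht hm
  rcases (add_nonneg hsl htm).eq_or_lt with h0 | hpos
  · obtain ⟨hsl0, htm0⟩ := (add_eq_zero_iff_of_nonneg hsl htm).1 h0.symm
    refine ⟨0, le_rfl, a, ha, ?_⟩
    rw [smul_smul, smul_smul, hsl0, htm0]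
    simp
  · refine ⟨s * l + t * m, hpos.le,
      (s * l / (s * l + t * m)) • a + (t * m / (s * l + t * m)) • b,
      hA ha hb (by positivity) (by positivity) (by field_simp), ?_⟩
    rw [smul_add, smul_smul, smul_smul, smul_smul, smul_smul,
      mul_div_cancel₀ _ hpos.ne', mul_div_cancel₀ _ hpos.ne']

theorem IsCone.convex {K : Set X} (hK : IsCone K) (hconv : ConeConvex K) : Convex ℝ K := by
  intro a ha b hb s t hs ht _
  rw [← hconv]
  exact add_mem_add (hK hs ha) (hK ht hb)

theorem IsCone.smul_set_eq {K : Set X} (hK : IsCone K) {l : ℝ} (hl : 0 < l) : l • K = K := by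
  refine (smul_set_subset_iff.2 fun x hx => hK hl.le hx).antisymm fun x hx => ?_
  exact ⟨l⁻¹ • x, hK (inv_nonneg.2 hl.le) hx, smul_inv_smul₀ hl.ne' x⟩

theorem IsCone.smul_mem_interior {K : Set X} (hK : IsCone K) {l : ℝ} (hl : 0 < l) {x : X}
    (hx : x ∈ interior K) : l • x ∈ interior K := by
  rw [← hK.smul_set_eq hl, interior_smul₀ hl.ne']
  exact smul_mem_smul_set hx

theorem IsCone.smul_mem_frontier {K : Set X} (hK : IsCone K) {l : ℝ} (hl : 0 < l) {x : X}
    (hx : x ∈ frontier K) : l • x ∈ frontier K := by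
  rw [← hK.smul_set_eq hl, frontier, closure_smul₀' hl.ne', interior_smul₀ hl.ne',
    ← smul_set_sdiff₀ hl.ne']
  exact smul_mem_smul_set hx

theorem inv_norm_smul_mem_sphere {x : X} (hx : x ≠ 0) : ‖x‖⁻¹ • x ∈ sphere (0 : X) 1 := by
  rw [mem_sphere_zero_iff_norm, norm_smul, norm_inv, norm_norm,
    inv_mul_cancel₀ (norm_ne_zero_iff.2 hx)]

end Cones

section StrictSeparation

theorem SSP.exists_functional {C K : Set X} (h : SSP C K) :
    ∃ (g : X →L[ℝ] ℝ) (r : ℝ), 0 < r ∧ ∀ p ∈ C ∩ sphere (0 : X) 1,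
      ∀ q ∈ (frontier K ∩ sphere (0 : X) 1) ∪ {0}, r < g p - g q := by
  obtain ⟨g, r, hg0, hg⟩ := geometric_hahn_banach_point_closed
    ((convex_convexHull ℝ _).sub (convex_convexHull ℝ _)).closure isClosed_closure h
  refine ⟨g, r, by simpa using hg0, fun p hp q hq => ?_⟩
  simpa using hg _ (subset_closure (sub_mem_sub (subset_convexHull ℝ _ hp)
    (subset_convexHull ℝ _ hq)))

theorem ssp_of_functional {C K : Set X} (g : X →L[ℝ] ℝ) {r : ℝ} (hr : 0 < r)
    (h : ∀ p ∈ C ∩ sphere (0 : X) 1, ∀ q ∈ (frontier K ∩ sphere (0 : X) 1) ∪ {0},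
      r ≤ g p - g q) : SSP C K := by
  have hsub : convexHull ℝ (C ∩ sphere (0 : X) 1) -
      convexHull ℝ ((frontier K ∩ sphere (0 : X) 1) ∪ {0}) ⊆ {x | r ≤ g x} := by
    rw [← convexHull_sub]
    refine convexHull_min ?_ (convex_halfSpace_ge g.isLinear r)
    rintro - ⟨p, hp, q, hq, rfl⟩
    simpa using h p hp q hq
  intro h0
  have : r ≤ g 0 := closure_minimal hsub (isClosed_le continuous_const g.continuous) h0
  simp only [map_zero] at this
  linarith

theorem SSP.exists_subset_BPCone {C K : Set X} (h : SSP C K) (hC : IsCone C) :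
    ∃ (f : X →L[ℝ] ℝ) (u : ℝ), 0 < u ∧ C ⊆ BPCone f u := by
  obtain ⟨f, u, hu, hf⟩ := h.exists_functional
  refine ⟨f, u, hu, fun x hx => ?_⟩
  rcases eq_or_ne x 0 with rfl | hx0
  · simp [BPCone]
  have hn : 0 < ‖x‖ := norm_pos_iff.2 hx0
  have := hf _ ⟨hC (inv_nonneg.2 hn.le) hx, inv_norm_smul_mem_sphere hx0⟩ 0 (Or.inr rfl)
  rw [map_smul, map_zero, sub_zero, smul_eq_mul, ← div_eq_inv_mul, lt_div_iff₀ hn] at this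
  exact this.le

theorem SSP.of_subset_interior {C K K' : Set X} (h : SSP C K') (hK' : IsCone K') {c₀ : X}
    (hc₀ : c₀ ∈ C ∩ sphere (0 : X) 1) (hc₀K' : c₀ ∈ interior K')
    (hK'K : ∀ x ∈ K', x ≠ 0 → x ∈ interior K) : SSP C K := by
  obtain ⟨g, r, hr, hg⟩ := h.exists_functional
  have hgp : ∀ p ∈ C ∩ sphere (0 : X) 1, r < g p := fun p hp => by
    simpa using hg p hp 0 (Or.inr rfl)
  have hfront : ∀ z ∈ frontier K', ‖z‖ ≤ 1 → ∀ p ∈ C ∩ sphere (0 : X) 1, g z ≤ g p - r := by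
    intro z hz hz1 p hp
    rcases eq_or_ne z 0 with rfl | hz0
    · simpa using (hgp p hp).le
    have hn : 0 < ‖z‖ := norm_pos_iff.2 hz0
    have := hg p hp _ (Or.inl ⟨hK'.smul_mem_frontier (inv_pos.2 hn) hz,
      inv_norm_smul_mem_sphere hz0⟩)
    rw [map_smul, smul_eq_mul, ← div_eq_inv_mul, lt_sub_comm, div_lt_iff₀ hn] at this
    nlinarith [hgp p hp]
  refine ssp_of_functional g hr fun p hp q hq => ?_
  rcases hq with ⟨hqK, hq1⟩ | rfl
  swap
  · simpa using (hgp p hp).le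
  have hq0 : q ≠ 0 := by rintro rfl; simp at hq1
  have hqK' : q ∉ K' := fun hmem => hqK.2 (hK'K q hmem hq0)
  obtain ⟨z, ⟨a, b, ha, hb, hab, rfl⟩, hzK'⟩ :=
    (convex_segment q c₀).isPreconnected.inter_frontier_nonempty
      ⟨c₀, right_mem_segment ℝ q c₀, interior_subset hc₀K'⟩
      ⟨q, left_mem_segment ℝ q c₀, hqK'⟩
  have hz1 : ‖a • q + b • c₀‖ ≤ 1 := by
    have := (convex_closedBall (0 : X) 1).segment_subset
      (sphere_subset_closedBall hq1) (sphere_subset_closedBall hc₀.2) ⟨a, b, ha, hb, hab, rfl⟩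
    simpa using this
  have ha0 : 0 < a := by
    refine ha.lt_of_ne fun ha0 => hzK'.2 ?_
    rw [← ha0, zero_smul, zero_add, show b = 1 by linarith, one_smul]
    exact hc₀K'
  have hzp := hfront _ hzK' hz1 p hp
  have hzc := hfront _ hzK' hz1 c₀ hc₀
  rw [map_add, map_smul, map_smul, smul_eq_mul, smul_eq_mul] at hzp hzc
  obtain rfl : b = 1 - a := by linarith
  have : a * g q ≤ a * (g p - r) := by
    nlinarith [mul_nonneg hb (sub_nonneg.2 hzc), mul_nonneg ha (sub_nonneg.2 hzp)]
  linarith [le_of_mul_le_mul_left this ha0]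

end StrictSeparation

section HenigCone

variable {B C : Set X} {f : X →L[ℝ] ℝ}

theorem henigCone_mono {δ δ' : ℝ} (h : δ ≤ δ') : henigCone B δ ⊆ henigCone B δ' :=
  coneGen_mono fun _ hx => le_trans hx h

theorem convex_setOf_infDist_le (hB : Convex ℝ B) (hne : B.Nonempty) (δ : ℝ) :
    Convex ℝ {x | infDist x B ≤ δ} := by
  rcases lt_or_ge δ 0 with hδ | hδ
  · convert convex_empty (𝕜 := ℝ) (E := X)
    exact eq_empty_of_forall_notMem fun x hx => (infDist_nonneg.trans hx).not_gt hδ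
  · convert hB.cthickening δ using 1
    ext x
    change infDist x B ≤ δ ↔ _
    rw [mem_cthickening_iff, ENNReal.le_ofReal_iff_toReal_le (infEDist_ne_top hne) hδ,
      infDist]

theorem convex_henigCone (hB : Convex ℝ B) (hne : B.Nonempty) (δ : ℝ) :
    Convex ℝ (henigCone B δ) :=
  convex_coneGen (convex_setOf_infDist_le hB hne δ)

theorem sub_le_apply_of_forall_apply_eq_one (hB : B.Nonempty) (hBf : ∀ b ∈ B, f b = 1) (w : X) :
    1 - ‖f‖ * infDist w B ≤ f w := by
  have := le_mul_infDist hB (norm_nonneg f) (a := 1 - f w) (x := w) fun b hb => by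
    rw [← hBf b hb, ← map_sub, dist_comm, dist_eq_norm]
    exact (le_abs_self _).trans (f.le_opNorm (b - w))
  linarith

theorem norm_pos_of_apply_eq_one {b : X} (hb : f b = 1) : 0 < ‖f‖ :=
  norm_pos_iff.2 (by rintro rfl; simp at hb)

theorem inv_norm_le_norm_of_apply_eq_one {b : X} (hb : f b = 1) : ‖f‖⁻¹ ≤ ‖b‖ := by
  rw [inv_le_iff_one_le_mul₀' (norm_pos_of_apply_eq_one hb), ← hb]
  exact (le_abs_self _).trans (f.le_opNorm b)

theorem inv_norm_le_deltaB (hB : B.Nonempty) (hBf : ∀ b ∈ B, f b = 1) : ‖f‖⁻¹ ≤ deltaB B :=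
  le_csInf (hB.image _) <| by
    rintro _ ⟨b, hb, rfl⟩
    exact inv_norm_le_norm_of_apply_eq_one (hBf b hb)

theorem norm_le_mul_apply_of_mem_henigCone {R δ : ℝ} (hB : B.Nonempty) (hBf : ∀ b ∈ B, f b = 1)
    (hBR : ∀ b ∈ B, ‖b‖ ≤ R) (hδ : δ ≤ 1) (hfδ : 2 * ‖f‖ * δ ≤ 1) {v : X}
    (hv : v ∈ henigCone B δ) : ‖v‖ ≤ 2 * (R + 1) * f v := by
  obtain ⟨l, hl, w, hw, rfl⟩ := hv
  have hwB : infDist w B ≤ δ := hw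
  have hwR : ‖w‖ ≤ R + 1 := by linarith [norm_le_add_infDist hB hBR w]
  have hfw : 1 / 2 ≤ f w := by
    nlinarith [sub_le_apply_of_forall_apply_eq_one hB hBf w, norm_nonneg f]
  have hR : 0 ≤ R + 1 := (norm_nonneg w).trans hwR
  rw [norm_smul, Real.norm_of_nonneg hl, map_smul, smul_eq_mul]
  nlinarith [mul_le_mul_of_nonneg_left hwR hl, mul_le_mul_of_nonneg_left hfw (mul_nonneg hl hR)]

theorem mul_infDist_le_of_mem_henigCone (hC : IsCone C) (hBC : B ⊆ C) (hB : B.Nonempty) {β δ : ℝ}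
    (hβ : ∀ b ∈ B, β ≤ ‖b‖) {v : X} (hv : v ∈ henigCone B δ) :
    (β - δ) * infDist v C ≤ δ * ‖v‖ := by
  obtain ⟨l, hl, w, hw, rfl⟩ := hv
  have hwB : infDist w B ≤ δ := hw
  have hwC : infDist w C ≤ δ := (infDist_le_infDist_of_subset hBC hB).trans hwB
  have hβw : β - δ ≤ ‖w‖ := by
    have h0 : β ≤ infDist 0 B := (le_infDist hB).2 fun b hb => by simpa using hβ b hb
    linarith [infDist_le_infDist_add_dist (x := (0 : X)) (y := w) (s := B), dist_zero_left w]
  have hlw : infDist (l • w) C ≤ l * infDist w C := by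
    rcases hl.eq_or_lt with rfl | hl0
    · obtain ⟨b, hb⟩ := hB
      simp [infDist_zero_of_mem (by simpa using hC le_rfl (hBC hb) : (0 : X) ∈ C)]
    · refine le_of_eq ?_
      calc infDist (l • w) C = infDist (l • w) (l • C) := by rw [hC.smul_set_eq hl0]
        _ = l * infDist w C := by rw [infDist_smul₀ hl0.ne', Real.norm_of_nonneg hl]
  rw [norm_smul, Real.norm_of_nonneg hl]
  have hδ : 0 ≤ δ := infDist_nonneg.trans hwB
  rcases le_or_gt (β - δ) 0 with hβδ | hβδ
  · nlinarith [mul_nonpos_of_nonpos_of_nonneg hβδ (infDist_nonneg (x := l • w) (s := C)),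
      mul_nonneg hδ (mul_nonneg hl (norm_nonneg w))]
  · nlinarith [mul_le_mul_of_nonneg_left (hlw.trans (mul_le_mul_of_nonneg_left hwC hl)) hβδ.le,
      mul_le_mul_of_nonneg_right hβw (mul_nonneg hl hδ)]

theorem mem_of_forall_mem_closure_henigCone (hC : IsCone C) (hcl : IsClosed C) (hBC : B ⊆ C)
    (hB : B.Nonempty) {β : ℝ} (hβ0 : 0 < β) (hβ : ∀ b ∈ B, β ≤ ‖b‖) {x : X}
    (hx : ∀ δ > 0, x ∈ closure (henigCone B δ)) : x ∈ C := by
  have hbound : ∀ δ > 0, (β - δ) * infDist x C ≤ δ * ‖x‖ := fun δ hδ =>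
    closure_minimal (fun v hv => mul_infDist_le_of_mem_henigCone hC hBC hB hβ hv)
      (isClosed_le (continuous_const.mul (continuous_infDist_pt C))
        (continuous_const.mul continuous_norm)) (hx δ hδ)
  have hlim : Tendsto (fun δ : ℝ => δ * ‖x‖ - (β - δ) * infDist x C) (𝓝[>] 0)
      (𝓝 (0 * ‖x‖ - (β - 0) * infDist x C)) :=
    ((continuous_id.mul continuous_const).sub
      ((continuous_const.sub continuous_id).mul continuous_const)).tendsto 0 |>.mono_left
      nhdsWithin_le_nhds
  have h0 := ge_of_tendsto hlim <|
    eventually_nhdsWithin_of_forall fun δ hδ => sub_nonneg.2 (hbound δ hδ)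
  have hd : infDist x C = 0 := le_antisymm (by nlinarith [infDist_nonneg (x := x) (s := C)])
    infDist_nonneg
  rwa [← hcl.closure_eq, mem_closure_iff_infDist_zero (hB.mono hBC)]

end HenigCone

section Slice

def coneSlice (C : Set X) (f : X →L[ℝ] ℝ) : Set X := C ∩ f ⁻¹' {1}

variable {C : Set X} {f : X →L[ℝ] ℝ} {u : ℝ}

theorem mem_BPCone {x : X} : x ∈ BPCone f u ↔ u * ‖x‖ ≤ f x := Iff.rfl

theorem apply_eq_one_of_mem_coneSlice {b : X} (hb : b ∈ coneSlice C f) : f b = 1 := hb.2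

theorem norm_le_of_mem_coneSlice (hu : 0 < u) (hCf : C ⊆ BPCone f u) {b : X}
    (hb : b ∈ coneSlice C f) : ‖b‖ ≤ u⁻¹ := by
  have := mem_BPCone.1 (hCf hb.1)
  rw [apply_eq_one_of_mem_coneSlice hb] at this
  rw [← one_div, le_div_iff₀ hu]
  linarith

theorem isBounded_coneSlice (hu : 0 < u) (hCf : C ⊆ BPCone f u) :
    Bornology.IsBounded (coneSlice C f) :=
  (isBounded_closedBall (x := (0 : X)) (r := u⁻¹)).subset fun _ hb =>
    mem_closedBall_zero_iff.2 (norm_le_of_mem_coneSlice hu hCf hb)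

theorem isBase_coneSlice (hC : IsCone C) (hCconv : Convex ℝ C) (hu : 0 < u)
    (hCf : C ⊆ BPCone f u) {c : X} (hc : c ∈ C) (hc0 : c ≠ 0) : IsBase C (coneSlice C f) := by
  have hpos : ∀ x ∈ C, x ≠ 0 → 0 < f x := fun x hx hx0 =>
    (mul_pos hu (norm_pos_iff.2 hx0)).trans_le (hCf hx)
  have hnormalize : ∀ x ∈ C, x ≠ 0 → (f x)⁻¹ • x ∈ coneSlice C f := fun x hx hx0 =>
    ⟨hC (inv_nonneg.2 (hpos x hx hx0).le) hx, by
      simp [inv_mul_cancel₀ (hpos x hx hx0).ne']⟩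
  refine ⟨⟨_, hnormalize c hc hc0⟩, hCconv.inter (convex_hyperplane f.isLinear 1),
    inter_subset_left, fun h0 => ?_, fun x hx hx0 => ?_⟩
  · have : (0 : X) ∈ f ⁻¹' {1} :=
      closure_minimal inter_subset_right (isClosed_singleton.preimage f.continuous) h0
    simp at this
  · refine ⟨(f x, (f x)⁻¹ • x), ⟨hpos x hx hx0, hnormalize x hx hx0,
      (smul_inv_smul₀ (hpos x hx hx0).ne' x).symm⟩, ?_⟩
    rintro ⟨l, b⟩ ⟨hl, hb, rfl⟩
    have hfl : f (l • b) = l := by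
      rw [map_smul, apply_eq_one_of_mem_coneSlice hb, smul_eq_mul, mul_one]
    simp only [hfl, inv_smul_smul₀ hl.ne']

theorem mem_interior_henigCone_coneSlice (hC : IsCone C) {δ : ℝ} {c w : X} (hc : c ∈ C)
    (hfc : 0 < f c) (hw : ‖w - c‖ < δ * f c) : w ∈ interior (henigCone (coneSlice C f) δ) := by
  set U := {x | infDist x (coneSlice C f) < δ}
  have hcB : (f c)⁻¹ • c ∈ coneSlice C f :=
    ⟨hC (inv_nonneg.2 hfc.le) hc, by simp [inv_mul_cancel₀ hfc.ne']⟩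
  have hwU : (f c)⁻¹ • w ∈ U := by
    calc infDist ((f c)⁻¹ • w) (coneSlice C f) ≤ dist ((f c)⁻¹ • w) ((f c)⁻¹ • c) :=
          infDist_le_dist_of_mem hcB
      _ = (f c)⁻¹ * ‖w - c‖ := by
          rw [dist_eq_norm, ← smul_sub, norm_smul, Real.norm_of_nonneg (inv_nonneg.2 hfc.le)]
      _ < δ := by rwa [inv_mul_lt_iff₀ hfc, mul_comm]
  have hUK : f c • U ⊆ henigCone (coneSlice C f) δ := smul_set_subset_iff.2 fun x hx =>
    isCone_coneGen _ hfc.le (subset_coneGen _ (le_of_lt (α := ℝ) hx))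
  exact mem_interior.2 ⟨f c • U, hUK,
    (isOpen_lt (continuous_infDist_pt _) continuous_const).smul₀ hfc.ne',
    (f c)⁻¹ • w, hwU, smul_inv_smul₀ hfc.ne' w⟩

theorem mem_interior_henigCone_of_mem_epsCone (hC : IsCone C) (hu : 0 < u) (hCf : C ⊆ BPCone f u)
    (hne : (C ∩ sphere (0 : X) 1).Nonempty) {α δ : ℝ} (hδ : 0 < δ) (hαδ : α < δ * u) {x : X}
    (hx : x ∈ epsCone C α) (hx0 : x ≠ 0) : x ∈ interior (henigCone (coneSlice C f) δ) := by
  obtain ⟨l, hl, w, hw, rfl⟩ := hx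
  have hl0 : 0 < l := hl.lt_of_ne (by rintro rfl; simp at hx0)
  obtain ⟨c, hc, hwc⟩ := (infDist_lt_iff hne).1 (lt_of_le_of_lt hw hαδ)
  have hfc : u ≤ f c := by
    simpa [mem_BPCone, mem_sphere_zero_iff_norm.1 hc.2] using hCf hc.1
  refine (isCone_coneGen _).smul_mem_interior hl0
    (mem_interior_henigCone_coneSlice hC hc.1 (hu.trans_le hfc) ?_)
  rw [← dist_eq_norm]
  exact hwc.trans_le (mul_le_mul_of_nonneg_left hfc hδ.le)

theorem mem_interior_epsCone {c : X} (hc : c ∈ C ∩ sphere (0 : X) 1) {α : ℝ} (hα : 0 < α) :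
    c ∈ interior (epsCone C α) :=
  mem_interior.2 ⟨ball c α, fun _ hw => subset_coneGen _
    ((infDist_le_dist_of_mem hc).trans (le_of_lt hw)), isOpen_ball, mem_ball_self hα⟩

theorem SSP.henigCone_coneSlice {α δ : ℝ} (h : SSP C (epsCone C α)) (hC : IsCone C)
    (hu : 0 < u) (hCf : C ⊆ BPCone f u) {c₀ : X} (hc₀ : c₀ ∈ C ∩ sphere (0 : X) 1)
    (hα : 0 < α) (hδ : 0 < δ) (hαδ : α < δ * u) : SSP C (henigCone (coneSlice C f) δ) :=
  h.of_subset_interior (isCone_coneGen _) hc₀ (mem_interior_epsCone hc₀ hα) fun _ hx hx0 =>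
    mem_interior_henigCone_of_mem_epsCone hC hu hCf ⟨c₀, hc₀⟩ hδ hαδ hx hx0

end Slice

theorem WeaklyCompact.elim_directed_family_closed_convex {A : Set X} (hA : WeaklyCompact A)
    {ι : Type*} [Nonempty ι] (F : ι → Set X) (hFcl : ∀ i, IsClosed (F i))
    (hFconv : ∀ i, Convex ℝ (F i)) (hAF : A ∩ ⋂ i, F i = ∅) (hF : Directed (· ⊇ ·) F) :
    ∃ i, A ∩ F i = ∅ := by
  set j := toWeakSpace ℝ X
  have hweak : ∀ i, IsClosed (j '' F i) := fun i => by
    have := (hFconv i).toWeakSpace_closure (𝕜 := ℝ)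
    rw [(hFcl i).closure_eq] at this
    exact this ▸ isClosed_closure
  obtain ⟨i, hi⟩ := hA.elim_directed_family_closed (fun i => j '' F i) hweak
    (by rw [← image_iInter j.bijective, ← image_inter j.injective, hAF, image_empty])
    (fun i k => let ⟨m, him, hkm⟩ := hF i k; ⟨m, image_mono him, image_mono hkm⟩)
  exact ⟨i, by rwa [← image_inter j.injective, image_eq_empty] at hi⟩

theorem exists_pos_neg_henigCone_inter_subset_closedBall {A B C : Set X} {f : X →L[ℝ] ℝ}
    {R ε : ℝ} (hC : IsCone C) (hcl : IsClosed C) (hA : WeaklyCompact A)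
    (hmin : (0 : X) ∈ MinSet A C) (hBC : B ⊆ C) (hB : B.Nonempty) (hBconv : Convex ℝ B)
    (hBf : ∀ b ∈ B, f b = 1) (hBR : ∀ b ∈ B, ‖b‖ ≤ R) (hε : 0 < ε) :
    ∃ δ > 0, A ∩ -henigCone B δ ⊆ closedBall 0 ε := by
  obtain ⟨b, hb⟩ := hB
  set δ : ℕ → ℝ := fun k => 1 / ((k : ℝ) + 2 * ‖f‖ + 1)
  have hδ0 : ∀ k, 0 < δ k := fun k => by positivity
  have hδ1 : ∀ k, δ k ≤ 1 := fun k => by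
    rw [div_le_one (by positivity)]
    linarith [(Nat.cast_nonneg k : (0 : ℝ) ≤ k), norm_nonneg f]
  have hδf : ∀ k, 2 * ‖f‖ * δ k ≤ 1 := fun k => by
    rw [mul_one_div, div_le_one (by positivity)]
    linarith [(Nat.cast_nonneg k : (0 : ℝ) ≤ k)]
  have hδ_anti : Antitone δ := fun k k' hkk' =>
    one_div_le_one_div_of_le (by positivity) (by gcongr)
  set F : ℕ → Set X := fun k => -closure (henigCone B (δ k)) ∩ {x | 2 * (R + 1) * f x ≤ -ε}
  have hF_anti : Antitone F := fun _ _ hkk' => inter_subset_inter_left _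
    (neg_subset_neg.2 (closure_mono (henigCone_mono (hδ_anti hkk'))))
  have hAF : A ∩ ⋂ k, F k = ∅ := by
    refine eq_empty_of_forall_notMem fun x ⟨hxA, hxF⟩ => ?_
    have hxF := mem_iInter.1 hxF
    have hxC : -x ∈ C := by
      refine mem_of_forall_mem_closure_henigCone hC hcl hBC ⟨b, hb⟩
        (inv_pos.2 (norm_pos_of_apply_eq_one (hBf b hb)))
        (fun b' hb' => inv_norm_le_norm_of_apply_eq_one (hBf b' hb')) fun η hη => ?_
      obtain ⟨k, hk⟩ := exists_nat_one_div_lt hη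
      refine closure_mono (henigCone_mono ((one_div_le_one_div_of_le (by positivity) ?_).trans
        hk.le)) (hxF k).1
      linarith [norm_nonneg f]
    have hx0 : x = 0 := by
      have : x ∈ (A - {0}) ∩ -C := ⟨⟨x, hxA, 0, rfl, sub_zero x⟩, hxC⟩
      rwa [hmin.2] at this
    have : 2 * (R + 1) * f x ≤ -ε := (hxF 0).2
    rw [hx0, map_zero, mul_zero] at this
    linarith
  obtain ⟨k, hk⟩ := hA.elim_directed_family_closed_convex F
    (fun k => isClosed_closure.neg.inter (isClosed_le (by fun_prop) continuous_const))
    (fun k => ((convex_henigCone hBconv ⟨b, hb⟩ _).closure.neg).inter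
      (convex_halfSpace_le ((2 * (R + 1)) • f).isLinear (-ε))) hAF hF_anti.directed_ge
  refine ⟨δ k, hδ0 k, fun x ⟨hxA, hxK⟩ => ?_⟩
  rw [mem_closedBall_zero_iff]
  by_contra hxε
  have hbound := norm_le_mul_apply_of_mem_henigCone ⟨b, hb⟩ hBf hBR (hδ1 k) (hδf k) hxK
  rw [norm_neg, map_neg] at hbound
  exact hk.subset ⟨hxA, subset_closure hxK, show 2 * (R + 1) * f x ≤ -ε by linarith⟩

end HenigPaper

theorem stmt16_general (C : Set X) (hC : NontrivialCone C)
    (hconv : ConeConvex C) (hcl : IsClosed C) (A : Set X) (hcpt : WeaklyCompact A)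
    (hssp : ∀ α : ℝ, 0 < α → α < 1 → SSP C (epsCone C α))
    (hmin : (0 : X) ∈ MinSet A C) :
    ∀ ε : ℝ, 0 < ε → ε < 1 →
      ∃ n : ℕ, 0 < n ∧ ∃ B : Set X, IsBase C B ∧ Bornology.IsBounded B ∧
        1 / (n : ℝ) < deltaB B ∧ SSP C (henigCone B (1 / (n : ℝ))) ∧
        A ∩ (-(henigCone B (1 / (n : ℝ)))) ⊆ A ∩ closedBall (0 : X) ε := by
  intro ε hε _
  obtain ⟨hcone, hC0, -⟩ := hC
  obtain ⟨c, hcC, hc0 : c ≠ 0⟩ := exists_of_ssubset hC0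
  have hc₀ : ‖c‖⁻¹ • c ∈ C ∩ sphere (0 : X) 1 :=
    ⟨hcone (inv_nonneg.2 (norm_nonneg c)) hcC, inv_norm_smul_mem_sphere hc0⟩
  obtain ⟨f, u, hu, hCf⟩ := (hssp (1 / 2) (by norm_num) (by norm_num)).exists_subset_BPCone hcone
  have hbase := isBase_coneSlice hcone (hcone.convex hconv) hu hCf hcC hc0
  have hBf : ∀ b ∈ coneSlice C f, f b = 1 := fun _ hb => apply_eq_one_of_mem_coneSlice hb
  have ⟨hBne, hBconv, hBC, _⟩ := hbase
  obtain ⟨δ, hδ, hincl⟩ := exists_pos_neg_henigCone_inter_subset_closedBall hcone hcl hcpt hmin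
    hBC hBne hBconv hBf (fun _ hb => norm_le_of_mem_coneSlice hu hCf hb) hε
  obtain ⟨n, hn⟩ := exists_nat_gt (max ‖f‖ δ⁻¹)
  have hfn : ‖f‖ < n := (le_max_left _ _).trans_lt hn
  have hnδ : 1 / (n : ℝ) ≤ δ := by
    rw [one_div]
    exact inv_le_of_inv_le₀ hδ ((le_max_right _ _).trans hn.le)
  have hf0 : 0 < ‖f‖ := norm_pos_of_apply_eq_one (hBf _ hBne.some_mem)
  have hn0 : (0 : ℝ) < n := hf0.trans hfn
  refine ⟨n, by exact_mod_cast hn0, coneSlice C f, hbase, isBounded_coneSlice hu hCf, ?_, ?_,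
    fun x hx => ⟨hx.1, hincl ⟨hx.1, neg_subset_neg.2 (henigCone_mono hnδ) hx.2⟩⟩⟩
  · calc 1 / (n : ℝ) < ‖f‖⁻¹ := by rw [one_div]; exact inv_strictAnti₀ hf0 hfn
      _ ≤ deltaB (coneSlice C f) := inv_norm_le_deltaB hBne hBf
  · refine (hssp (min (1 / 2) (u / (2 * n))) (by positivity)
      ((min_le_left _ _).trans_lt (by norm_num))).henigCone_coneSlice hcone hu hCf hc₀
      (by positivity) (by positivity) ((min_le_right _ _).trans_lt ?_)
    rw [one_div_mul_eq_div]
    exact div_lt_div_of_pos_left hu hn0 (by linarith)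

/-- If `C` is closed, `(C, C_α)` has the SSP for all `0 < α < 1`, `A` is weakly
compact and `0 ∈ Min(A,C)`, then for every `0 < ε < 1` there are `n_ε ∈ ℕ` and a bounded base
`B(ε)` of `C` with `1/n_ε < δ_{B(ε)}`, `(C, C_{(B(ε),1/n_ε)})` has the SSP, and
`A ∩ (-C_{(B(ε),1/n_ε)}) ⊆ A ∩ ε B_X`. -/
theorem stmt16 (C : Set X) (hC : NontrivialCone C) (hpt : PointedCone' C)
    (hconv : ConeConvex C) (hcl : IsClosed C) (A : Set X) (hcpt : WeaklyCompact A)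
    (hssp : ∀ α : ℝ, 0 < α → α < 1 → SSP C (epsCone C α))
    (hmin : (0 : X) ∈ MinSet A C) :
    ∀ ε : ℝ, 0 < ε → ε < 1 →
      ∃ n : ℕ, 0 < n ∧ ∃ B : Set X, IsBase C B ∧ Bornology.IsBounded B ∧
        1 / (n : ℝ) < deltaB B ∧ SSP C (henigCone B (1 / (n : ℝ))) ∧
        A ∩ (-(henigCone B (1 / (n : ℝ)))) ⊆ A ∩ closedBall (0 : X) ε :=
  stmt16_general C hC hconv hcl A hcpt hssp hmin
end

section
/- Let X be a real normed space partially ordered by a nontrivial pointed convex cone C, and let A ⊆ X. Assume that C is closed and that (C, C_α) has the strict separation property for every 0 < α < 1. If for every x ∈ Min(A, C) there exists 0 < δ_x < 1 such that A ∩ (x − C_{δ_x}) is weakly compact, then Min(A, C) ⊆ closure(GHe(A, C)). -/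
open Set Metric Pointwise

open HenigPaper

variable {X : Type*} [NormedAddCommGroup X] [NormedSpace ℝ X]



namespace StmtAux

variable {X : Type*} [NormedAddCommGroup X] [NormedSpace ℝ X]

lemma isCone_coneGen (A : Set X) : IsCone (coneGen A) := by
  rintro l hl x ⟨m, hm, a, ha, rfl⟩
  exact ⟨l * m, mul_nonneg hl hm, a, ha, (mul_smul l m a).symm⟩

lemma zero_mem_coneGen {A : Set X} (h : A.Nonempty) : (0 : X) ∈ coneGen A := by
  obtain ⟨a, ha⟩ := h
  exact ⟨0, le_rfl, a, ha, (zero_smul ℝ a).symm⟩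

lemma coneGen_mono {A B : Set X} (h : A ⊆ B) : coneGen A ⊆ coneGen B := by
  rintro x ⟨l, hl, a, ha, rfl⟩
  exact ⟨l, hl, a, h ha, rfl⟩

lemma isCone_epsCone (C : Set X) (α : ℝ) : IsCone (epsCone C α) :=
  isCone_coneGen _

lemma epsCone_mono (C : Set X) {a b : ℝ} (hab : a ≤ b) : epsCone C a ⊆ epsCone C b :=
  coneGen_mono fun x hx => le_trans hx hab

lemma exists_unit {C : Set X} (hC : NontrivialCone C) :
    ∃ e, e ∈ C ∩ sphere (0:X) 1 := by
  obtain ⟨hcone, hlt, -⟩ := hC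
  obtain ⟨c, hc, hc0⟩ : ∃ c, c ∈ C ∧ c ≠ 0 := by
    obtain ⟨c, hc, h0⟩ := Set.exists_of_ssubset hlt
    exact ⟨c, hc, by simpa using h0⟩
  have hn : (0:ℝ) < ‖c‖ := norm_pos_iff.2 hc0
  refine ⟨‖c‖⁻¹ • c, ⟨hcone (by positivity) hc, ?_⟩⟩
  rw [mem_sphere_zero_iff_norm, norm_smul, norm_inv, norm_norm]
  field_simp

lemma zero_mem_epsCone {C : Set X} {e : X} (he : e ∈ C ∩ sphere (0:X) 1) {α : ℝ} (hα : 0 ≤ α) :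
    (0:X) ∈ epsCone C α := by
  refine zero_mem_coneGen ⟨e, ?_⟩
  simpa [infDist_zero_of_mem he] using hα

lemma sep_package {C : Set X} {α : ℝ} (hssp : SSP C (epsCone C α)) {e : X}
    (he : e ∈ C ∩ sphere (0:X) 1) :
    ∃ (f : X →L[ℝ] ℝ) (u τ : ℝ), 0 < u ∧ u ≤ τ ∧
      (∀ x ∈ C ∩ sphere (0:X) 1, τ ≤ f x) ∧
      ∀ x ∈ frontier (epsCone C α) ∩ sphere (0:X) 1, f x ≤ τ - u := by
  classical
  set CS := C ∩ sphere (0:X) 1 with hCS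
  set F := (frontier (epsCone C α) ∩ sphere (0:X) 1) ∪ {(0:X)} with hF
  have hconv : Convex ℝ (closure (convexHull ℝ CS - convexHull ℝ F)) :=
    ((convex_convexHull ℝ CS).sub (convex_convexHull ℝ F)).closure
  have hssp' : (0:X) ∉ closure (convexHull ℝ CS - convexHull ℝ F) := hssp
  obtain ⟨f, u, h0u, hu⟩ := geometric_hahn_banach_point_closed hconv isClosed_closure hssp'
  rw [map_zero] at h0u
  have key : ∀ a ∈ CS, ∀ b ∈ F, u < f a - f b := by
    intro a ha b hb
    have hmem : a - b ∈ convexHull ℝ CS - convexHull ℝ F :=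
      Set.sub_mem_sub (subset_convexHull ℝ _ ha) (subset_convexHull ℝ _ hb)
    have := hu _ (subset_closure hmem)
    simpa [map_sub] using this
  have h0F : (0:X) ∈ F := Or.inr rfl
  have hCSlb : ∀ a ∈ CS, u ≤ f a := by
    intro a ha
    have := key a ha 0 h0F
    simp only [map_zero] at this
    linarith
  have hne : (f '' CS).Nonempty := ⟨f e, e, he, rfl⟩
  have hbdd : BddBelow (f '' CS) := ⟨u, by rintro y ⟨a, ha, rfl⟩; exact hCSlb a ha⟩
  refine ⟨f, u, sInf (f '' CS), h0u,
    le_csInf hne (by rintro y ⟨a, ha, rfl⟩; exact hCSlb a ha), ?_, ?_⟩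
  · intro x hx
    exact csInf_le hbdd ⟨x, hx, rfl⟩
  · intro x hx
    have hxF : x ∈ F := Or.inl hx
    have hle : f x + u ≤ sInf (f '' CS) := by
      apply le_csInf hne
      rintro y ⟨a, ha, rfl⟩
      have := key a ha x hxF
      linarith
    linarith

lemma mem_BPCone {f : X →L[ℝ] ℝ} {β : ℝ} {x : X} : x ∈ BPCone f β ↔ β * ‖x‖ ≤ f x := Iff.rfl

lemma f_le_opNorm' (f : X →L[ℝ] ℝ) (x : X) : f x ≤ ‖f‖ * ‖x‖ :=
  le_trans (le_trans (le_abs_self _) (Real.norm_eq_abs _).symm.le) (f.le_opNorm x)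

lemma zero_mem_BPCone (f : X →L[ℝ] ℝ) (β : ℝ) : (0:X) ∈ BPCone f β := by
  simp [BPCone]

lemma isCone_BPCone (f : X →L[ℝ] ℝ) (β : ℝ) : IsCone (BPCone f β) := by
  intro l hl x hx
  have h1 : β * ‖l • x‖ = l * (β * ‖x‖) := by
    rw [norm_smul, Real.norm_of_nonneg hl]; ring
  rw [mem_BPCone, h1, map_smul, smul_eq_mul]
  exact mul_le_mul_of_nonneg_left hx hl

lemma convex_BPCone (f : X →L[ℝ] ℝ) {β : ℝ} (hβ : 0 ≤ β) : Convex ℝ (BPCone f β) := by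
  intro x hx y hy a b ha hb hab
  have h1 : β * ‖a • x + b • y‖ ≤ a * (β * ‖x‖) + b * (β * ‖y‖) := by
    calc β * ‖a • x + b • y‖ ≤ β * (‖a • x‖ + ‖b • y‖) :=
          mul_le_mul_of_nonneg_left (norm_add_le _ _) hβ
      _ = a * (β * ‖x‖) + b * (β * ‖y‖) := by
          rw [norm_smul, norm_smul, Real.norm_of_nonneg ha, Real.norm_of_nonneg hb]; ring
  have h2 : a * (β * ‖x‖) + b * (β * ‖y‖) ≤ a * f x + b * f y :=
    add_le_add (mul_le_mul_of_nonneg_left hx ha) (mul_le_mul_of_nonneg_left hy hb)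
  have h3 : f (a • x + b • y) = a * f x + b * f y := by
    simp [map_add, map_smul, smul_eq_mul]
  rw [mem_BPCone, h3]
  linarith

lemma coneConvex_BPCone (f : X →L[ℝ] ℝ) {β : ℝ} (hβ : 0 ≤ β) : ConeConvex (BPCone f β) := by
  apply Set.Subset.antisymm
  · rintro z ⟨x, hx, y, hy, rfl⟩
    rw [mem_BPCone] at hx hy ⊢
    have h1 : β * ‖x + y‖ ≤ β * ‖x‖ + β * ‖y‖ := by
      have := mul_le_mul_of_nonneg_left (norm_add_le x y) hβ
      linarith [this]
    rw [map_add]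
    linarith
  · intro x hx
    exact ⟨x, hx, 0, zero_mem_BPCone f β, add_zero x⟩

lemma isClosed_BPCone (f : X →L[ℝ] ℝ) (β : ℝ) : IsClosed (BPCone f β) :=
  isClosed_le (continuous_const.mul continuous_norm) f.continuous

lemma convex_BPCone_diff (f : X →L[ℝ] ℝ) {β : ℝ} (hβ : 0 < β) :
    Convex ℝ (BPCone f β \ {0}) := by
  intro x hx y hy a b ha hb hab
  have hz : a • x + b • y ∈ BPCone f β := convex_BPCone f hβ.le hx.1 hy.1 ha hb hab
  refine ⟨hz, ?_⟩
  simp only [Set.mem_singleton_iff]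
  rcases eq_or_lt_of_le ha with h | h
  · have hb1 : b = 1 := by linarith
    have hy0 : y ≠ 0 := hy.2
    rw [← h, hb1]
    simpa using hy0
  · have hx0 : x ≠ 0 := hx.2
    have hnx : 0 < ‖x‖ := norm_pos_iff.2 hx0
    have hfx : 0 < f x := lt_of_lt_of_le (by positivity) hx.1
    have hfy : (0:ℝ) ≤ f y := le_trans (by positivity) hy.1
    have hfz : 0 < f (a • x + b • y) := by
      have h3 : f (a • x + b • y) = a * f x + b * f y := by
        simp [map_add, map_smul, smul_eq_mul]
      rw [h3]
      nlinarith
    intro h0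
    rw [h0, map_zero] at hfz
    exact lt_irrefl 0 hfz

lemma exists_dilating {C : Set X} (hC : NontrivialCone C) {α : ℝ} (hα0 : 0 < α)
    (hssp : SSP C (epsCone C α)) {e : X} (he : e ∈ C ∩ sphere (0:X) 1) :
    ∃ (f : X →L[ℝ] ℝ) (β : ℝ), 0 < β ∧
      C \ {(0:X)} ⊆ interior (BPCone f β) ∧ BPCone f β ⊆ epsCone C α := by
  obtain ⟨f, u, τ, hu, huτ, hCS, hFr⟩ := sep_package hssp he
  have hβ : 0 < τ - u/2 := by linarith
  refine ⟨f, τ - u/2, hβ, ?_, ?_⟩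
  · have hopen : IsOpen {x : X | (τ - u/2) * ‖x‖ < f x} :=
      isOpen_lt (continuous_const.mul continuous_norm) f.continuous
    have hsub0 : {x : X | (τ - u/2) * ‖x‖ < f x} ⊆ BPCone f (τ - u/2) :=
      fun x hx => mem_BPCone.mpr (le_of_lt hx)
    refine subset_trans ?_ (interior_maximal hsub0 hopen)
    rintro x ⟨hxC, hx0⟩
    have hx0' : x ≠ 0 := hx0
    have hn : 0 < ‖x‖ := norm_pos_iff.2 hx0'
    have hxs : ‖x‖⁻¹ • x ∈ C ∩ sphere (0:X) 1 := by
      refine ⟨hC.1 (by positivity) hxC, ?_⟩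
      rw [mem_sphere_zero_iff_norm, norm_smul, norm_inv, norm_norm]
      field_simp
    have h1 : τ ≤ f (‖x‖⁻¹ • x) := hCS _ hxs
    have h2 : f (‖x‖⁻¹ • x) = ‖x‖⁻¹ * f x := by simp [map_smul, smul_eq_mul]
    rw [h2] at h1
    show (τ - u/2) * ‖x‖ < f x
    have h3 : τ * ‖x‖ ≤ f x := by
      have := mul_le_mul_of_nonneg_left h1 hn.le
      rw [← mul_assoc, mul_inv_cancel₀ (ne_of_gt hn), one_mul] at this
      linarith [this]
    nlinarith
  · have hCSint : ∀ c ∈ C ∩ sphere (0:X) 1, c ∈ interior (epsCone C α) := by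
      intro c hc
      have hball : Metric.ball c α ⊆ epsCone C α := by
        intro y hy
        refine ⟨1, zero_le_one, y, ?_, (one_smul ℝ y).symm⟩
        have h1 : infDist y (C ∩ sphere (0:X) 1) ≤ dist y c := infDist_le_dist_of_mem hc
        exact le_trans h1 (le_of_lt (Metric.mem_ball.mp hy))
      exact interior_maximal hball Metric.isOpen_ball (Metric.mem_ball_self hα0)
    have heK : e ∈ BPCone f (τ - u/2) := by
      rw [mem_BPCone, mem_sphere_zero_iff_norm.mp he.2, mul_one]
      have := hCS e he
      linarith
    have hKS : BPCone f (τ - u/2) ∩ sphere (0:X) 1 ⊆ interior (epsCone C α) := by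
      have himg : (fun x : X => ‖x‖⁻¹ • x) '' (BPCone f (τ - u/2) \ {0}) =
          BPCone f (τ - u/2) ∩ sphere (0:X) 1 := by
        apply Set.Subset.antisymm
        · rintro _ ⟨x, ⟨hxK, hx0⟩, rfl⟩
          have hx0' : x ≠ (0:X) := hx0
          have hn : 0 < ‖x‖ := norm_pos_iff.2 hx0'
          refine ⟨isCone_BPCone f (τ - u/2) (by positivity) hxK, ?_⟩
          show ‖x‖⁻¹ • x ∈ sphere (0:X) 1
          rw [mem_sphere_zero_iff_norm, norm_smul, norm_inv, norm_norm]
          field_simp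
        · rintro x ⟨hxK, hxs⟩
          have hx1 : ‖x‖ = 1 := mem_sphere_zero_iff_norm.mp hxs
          have hx0 : x ≠ 0 := by
            intro h
            rw [h, norm_zero] at hx1
            norm_num at hx1
          refine ⟨x, ⟨hxK, hx0⟩, ?_⟩
          show ‖x‖⁻¹ • x = x
          rw [hx1]; simp
      have hpc : IsPreconnected (BPCone f (τ - u/2) ∩ sphere (0:X) 1) := by
        rw [← himg]
        apply IsPreconnected.image (convex_BPCone_diff f hβ).isPreconnected
        apply ContinuousOn.smul
        · exact (continuousOn_id.norm).inv₀ (fun x hx => norm_ne_zero_iff.2 hx.2)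
        · exact continuousOn_id
      apply hpc.subset_left_of_subset_union isOpen_interior
        isClosed_closure.isOpen_compl
        (disjoint_compl_right.mono_left interior_subset_closure) ?_ ?_
      · intro x hx
        by_cases hclx : x ∈ closure (epsCone C α)
        · left
          by_contra hint
          have hfr : x ∈ frontier (epsCone C α) := ⟨hclx, hint⟩
          have h1 := hFr x ⟨hfr, hx.2⟩
          have h2 := hx.1
          rw [mem_BPCone, mem_sphere_zero_iff_norm.mp hx.2, mul_one] at h2
          linarith
        · right; exact hclx
      · exact ⟨e, ⟨⟨heK, he.2⟩, hCSint e he⟩⟩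
    intro x hxK
    by_cases hx0 : x = (0:X)
    · rw [hx0]; exact zero_mem_epsCone he hα0.le
    · have hn : 0 < ‖x‖ := norm_pos_iff.2 hx0
      have hxs : ‖x‖⁻¹ • x ∈ BPCone f (τ - u/2) ∩ sphere (0:X) 1 := by
        refine ⟨isCone_BPCone f (τ - u/2) (by positivity) hxK, ?_⟩
        rw [mem_sphere_zero_iff_norm, norm_smul, norm_inv, norm_norm]
        field_simp
      have hmem : ‖x‖⁻¹ • x ∈ epsCone C α := interior_subset (hKS hxs)
      have hfin := isCone_epsCone C α hn.le hmem
      rwa [smul_inv_smul₀ (ne_of_gt hn)] at hfin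

lemma f_lb {C : Set X} {f : X →L[ℝ] ℝ} {u α : ℝ} (hu : 0 < u)
    (hfu : ∀ x ∈ C ∩ sphere (0:X) 1, u ≤ f x) (hne : (C ∩ sphere (0:X) 1).Nonempty)
    (hα0 : 0 ≤ α) (hα1 : α ≤ 1) (hαf : ‖f‖ * α ≤ u / 2) :
    ∀ w ∈ epsCone C α, u / 4 * ‖w‖ ≤ f w := by
  have hfpos : 0 < ‖f‖ := by
    obtain ⟨e, he⟩ := hne
    have h1 := hfu e he
    have h2 : f e ≤ ‖f‖ * ‖e‖ := f_le_opNorm' f e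
    have he1 : ‖e‖ = 1 := mem_sphere_zero_iff_norm.mp he.2
    rw [he1, mul_one] at h2
    linarith
  rintro w ⟨l, hl, a, ha, rfl⟩
  have ha' : infDist a (C ∩ sphere (0:X) 1) ≤ α := ha
  have h2 : ‖a‖ ≤ 1 + α := by
    by_contra h
    push_neg at h
    obtain ⟨c, hc, hdc⟩ := (infDist_lt_iff hne).mp
      (lt_of_le_of_lt ha' (by linarith : α < ‖a‖ - 1))
    have hc1 : ‖c‖ = 1 := mem_sphere_zero_iff_norm.mp hc.2
    have h3 : ‖a‖ - ‖c‖ ≤ ‖a - c‖ := norm_sub_norm_le a c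
    rw [dist_eq_norm] at hdc
    linarith
  have h1 : u - ‖f‖ * α ≤ f a := by
    by_contra h
    push_neg at h
    have hρ0 : 0 < (u - f a - ‖f‖ * α) / ‖f‖ := div_pos (by linarith) hfpos
    obtain ⟨c, hc, hdc⟩ := (infDist_lt_iff hne).mp
      (lt_of_le_of_lt ha' (by linarith : α < α + (u - f a - ‖f‖ * α) / ‖f‖))
    have hcu : u ≤ f c := hfu c hc
    have h4 : f c - f a ≤ ‖f‖ * dist a c := by
      have h5 := f.le_opNorm (c - a)
      rw [map_sub] at h5
      have hd : ‖c - a‖ = dist a c := by rw [dist_comm, dist_eq_norm]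
      rw [hd] at h5
      exact le_trans (le_trans (le_abs_self _) (Real.norm_eq_abs _).symm.le) h5
    have h7 : ‖f‖ * dist a c < ‖f‖ * (α + (u - f a - ‖f‖ * α) / ‖f‖) :=
      mul_lt_mul_of_pos_left hdc hfpos
    have h8 : ‖f‖ * (α + (u - f a - ‖f‖ * α) / ‖f‖) = u - f a := by
      field_simp
      ring
    nlinarith
  have hfa : u / 2 ≤ f a := by linarith
  have hwnorm : ‖l • a‖ ≤ l * 2 := by
    rw [norm_smul, Real.norm_of_nonneg hl]
    have hm1 := mul_le_mul_of_nonneg_left h2 hl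
    have hm2 := mul_le_mul_of_nonneg_left hα1 hl
    linarith
  have hfw : f (l • a) = l * f a := by simp [map_smul, smul_eq_mul]
  rw [hfw]
  have hm3 : u / 4 * ‖l • a‖ ≤ u / 4 * (l * 2) :=
    mul_le_mul_of_nonneg_left hwnorm (by linarith)
  have hm4 : l * (u / 2) ≤ l * f a := mul_le_mul_of_nonneg_left hfa hl
  linarith

lemma hull_bound {C : Set X} (hcone : IsCone C) (hconv : ConeConvex C) {f : X →L[ℝ] ℝ}
    {u α : ℝ} (hu : 0 < u) (hfu : ∀ x ∈ C ∩ sphere (0:X) 1, u ≤ f x)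
    (hne : (C ∩ sphere (0:X) 1).Nonempty) (hα0 : 0 < α) (hαf : 2 * α * ‖f‖ ≤ u / 2) :
    ∀ w ∈ closure (convexHull ℝ (epsCone C α)), infDist w C ≤ 4 * ‖f‖ / u * α * ‖w‖ := by
  set P : Set X := {w | ∃ v ∈ C, ∃ l : ℝ, 0 ≤ l ∧ ‖w - v‖ ≤ 2 * α * l ∧ u * l ≤ f v} with hP
  have hP1 : epsCone C α ⊆ P := by
    rintro _ ⟨l, hl, a, ha, rfl⟩
    have ha' : infDist a (C ∩ sphere (0:X) 1) ≤ α := ha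
    obtain ⟨c, hc, hdc⟩ := (infDist_lt_iff hne).mp
      (lt_of_le_of_lt ha' (by linarith : α < 2 * α))
    refine ⟨l • c, hcone hl hc.1, l, hl, ?_, ?_⟩
    · rw [← smul_sub, norm_smul, Real.norm_of_nonneg hl]
      have h1 : ‖a - c‖ < 2 * α := by rw [← dist_eq_norm]; exact hdc
      have hm1 := mul_le_mul_of_nonneg_left h1.le hl
      linarith
    · have h2 := hfu c hc
      rw [map_smul, smul_eq_mul]
      have hm1 := mul_le_mul_of_nonneg_left h2 hl
      linarith
  have hP2 : Convex ℝ P := by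
    rintro w1 ⟨v1, hv1, l1, hl1, hwv1, hfl1⟩ w2 ⟨v2, hv2, l2, hl2, hwv2, hfl2⟩ p q hp hq hpq
    refine ⟨p • v1 + q • v2, ?_, p * l1 + q * l2, by positivity, ?_, ?_⟩
    · have hm1 : p • v1 ∈ C := hcone hp hv1
      have hm2 : q • v2 ∈ C := hcone hq hv2
      have := Set.add_mem_add hm1 hm2
      rwa [hconv] at this
    · have heq : (p • w1 + q • w2) - (p • v1 + q • v2) = p • (w1 - v1) + q • (w2 - v2) := by
        rw [smul_sub, smul_sub]; abel
      rw [heq]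
      calc ‖p • (w1 - v1) + q • (w2 - v2)‖ ≤ ‖p • (w1 - v1)‖ + ‖q • (w2 - v2)‖ :=
            norm_add_le _ _
        _ = p * ‖w1 - v1‖ + q * ‖w2 - v2‖ := by
            rw [norm_smul, norm_smul, Real.norm_of_nonneg hp, Real.norm_of_nonneg hq]
        _ ≤ 2 * α * (p * l1 + q * l2) := by
            have hm1 := mul_le_mul_of_nonneg_left hwv1 hp
            have hm2 := mul_le_mul_of_nonneg_left hwv2 hq
            nlinarith
    · have heq : f (p • v1 + q • v2) = p * f v1 + q * f v2 := by
        simp [map_add, map_smul, smul_eq_mul]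
      rw [heq]
      have hm1 := mul_le_mul_of_nonneg_left hfl1 hp
      have hm2 := mul_le_mul_of_nonneg_left hfl2 hq
      nlinarith
  have hPbound : ∀ w ∈ P, infDist w C ≤ 4 * ‖f‖ / u * α * ‖w‖ := by
    rintro w ⟨v, hv, l, hl, hwv, hfl⟩
    have hfv : f v ≤ ‖f‖ * ‖v‖ := f_le_opNorm' f v
    have hnv : ‖v‖ ≤ ‖w‖ + 2 * α * l := by
      have h1 : ‖v‖ - ‖w‖ ≤ ‖v - w‖ := norm_sub_norm_le v w
      rw [norm_sub_rev] at h1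
      linarith
    have hfn : (0:ℝ) ≤ ‖f‖ := norm_nonneg f
    have hl2 : u * l ≤ ‖f‖ * ‖w‖ + u / 2 * l := by
      have h1 : ‖f‖ * ‖v‖ ≤ ‖f‖ * (‖w‖ + 2 * α * l) := mul_le_mul_of_nonneg_left hnv hfn
      have h2 : (2 * α * ‖f‖) * l ≤ (u / 2) * l := mul_le_mul_of_nonneg_right hαf hl
      nlinarith
    have hlb : u / 2 * l ≤ ‖f‖ * ‖w‖ := by linarith
    have hid : infDist w C ≤ ‖w - v‖ := by
      rw [← dist_eq_norm]; exact infDist_le_dist_of_mem hv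
    have hwn : (0:ℝ) ≤ ‖w‖ := norm_nonneg w
    have hfinal : 2 * α * l ≤ 4 * ‖f‖ / u * α * ‖w‖ := by
      rw [div_mul_eq_mul_div, div_mul_eq_mul_div, le_div_iff₀ hu]
      nlinarith [mul_le_mul_of_nonneg_left hlb (by positivity : (0:ℝ) ≤ 4 * α)]
    linarith
  have hclosed : IsClosed {w : X | infDist w C ≤ 4 * ‖f‖ / u * α * ‖w‖} :=
    isClosed_le (continuous_infDist_pt C) (continuous_const.mul continuous_norm)
  intro w hw
  have hhull : convexHull ℝ (epsCone C α) ⊆ P := convexHull_min hP1 hP2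
  exact (closure_minimal (fun z hz => hPbound z (hhull hz)) hclosed) hw

lemma isClosed_weak_image {s : Set X} (hs : Convex ℝ s) (hc : IsClosed s) :
    IsClosed (toWeakSpace ℝ X '' s) := by
  have h := hs.toWeakSpace_closure (𝕜 := ℝ)
  rw [hc.closure_eq] at h
  rw [h]
  exact isClosed_closure

lemma continuous_weak_f (f : X →L[ℝ] ℝ) :
    Continuous fun w : WeakSpace ℝ X => f ((toWeakSpace ℝ X).symm w) :=
  WeakBilin.eval_continuous (topDualPairing ℝ X).flip f

lemma exists_min_on_weak {B G : Set X} (hB : IsCompact (toWeakSpace ℝ X '' B))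
    (hGc : Convex ℝ G) (hGcl : IsClosed G) (hne : (B ∩ G).Nonempty) (f : X →L[ℝ] ℝ) :
    ∃ y ∈ B ∩ G, ∀ z ∈ B ∩ G, f y ≤ f z := by
  have himg : toWeakSpace ℝ X '' (B ∩ G) =
      (toWeakSpace ℝ X '' B) ∩ (toWeakSpace ℝ X '' G) :=
    Set.image_inter (toWeakSpace ℝ X).injective
  have hcpt : IsCompact (toWeakSpace ℝ X '' (B ∩ G)) := by
    rw [himg]
    exact hB.inter_right (isClosed_weak_image hGc hGcl)
  have hne' : (toWeakSpace ℝ X '' (B ∩ G)).Nonempty := hne.image _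
  obtain ⟨w, hw, hmin⟩ := hcpt.exists_isMinOn hne' ((continuous_weak_f f).continuousOn)
  obtain ⟨y, hy, rfl⟩ := hw
  refine ⟨y, hy, fun z hz => ?_⟩
  have h1 := hmin (Set.mem_image_of_mem _ hz)
  simpa using h1

lemma mem_singleton_sub {S : Set X} {x₀ a : X} : a ∈ ({x₀} : Set X) - S ↔ x₀ - a ∈ S := by
  constructor
  · rintro ⟨p, hp, q, hq, rfl⟩
    rw [Set.mem_singleton_iff] at hp
    subst hp
    simpa [sub_sub_cancel] using hq
  · intro h
    exact ⟨x₀, rfl, x₀ - a, h, sub_sub_cancel x₀ a⟩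

lemma isClosed_singleton_sub {S : Set X} (h : IsClosed S) (x₀ : X) :
    IsClosed (({x₀} : Set X) - S) := by
  have heq : ({x₀} : Set X) - S = (fun a => x₀ - a) ⁻¹' S := by
    ext a; exact mem_singleton_sub
  rw [heq]
  exact h.preimage (continuous_const.sub continuous_id)

lemma convex_singleton_sub {S : Set X} (h : Convex ℝ S) (x₀ : X) :
    Convex ℝ (({x₀} : Set X) - S) :=
  (convex_singleton x₀).sub h

lemma mem_minSet_iff {A K : Set X} {x : X} (h0 : (0:X) ∈ K) (hx : x ∈ A) :
    x ∈ MinSet A K ↔ ∀ a ∈ A, x - a ∈ K → a = x := by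
  constructor
  · rintro ⟨-, heq⟩ a ha hxa
    have hmem : a - x ∈ (A - ({x} : Set X)) ∩ (-K) := by
      constructor
      · exact ⟨a, ha, x, rfl, rfl⟩
      · rw [Set.mem_neg, neg_sub]; exact hxa
    rw [heq] at hmem
    exact sub_eq_zero.mp hmem
  · intro h
    refine ⟨hx, ?_⟩
    apply Set.Subset.antisymm
    · rintro z ⟨⟨p, hp, q, hq, rfl⟩, hzK⟩
      rw [Set.mem_singleton_iff] at hq
      subst hq
      rw [Set.mem_neg, neg_sub] at hzK
      have := h p hp hzK
      simp [this]
    · rintro z hz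
      rw [Set.mem_singleton_iff] at hz
      subst hz
      constructor
      · exact ⟨x, hx, x, rfl, sub_self x⟩
      · rw [Set.mem_neg, neg_zero]; exact h0

end StmtAux

open StmtAux

/-- Global density of Henig global proper efficient points under weak
compactness of one section per efficient point. -/
theorem stmt18 (C : Set X) (hC : NontrivialCone C) (hpt : PointedCone' C)
    (hconv : ConeConvex C) (hcl : IsClosed C) (A : Set X)
    (hssp : ∀ α : ℝ, 0 < α → α < 1 → SSP C (epsCone C α))
    (hsec : ∀ x ∈ MinSet A C, ∃ δ : ℝ, 0 < δ ∧ δ < 1 ∧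
      WeaklyCompact (A ∩ (({x} : Set X) - epsCone C δ))) :
    MinSet A C ⊆ closure (GHe A C) := by
  intro x₀ hx₀
  obtain ⟨δ, hδ0, hδ1, hBcpt⟩ := hsec x₀ hx₀
  set B := A ∩ (({x₀} : Set X) - epsCone C δ) with hBdef
  obtain ⟨e, he⟩ := exists_unit hC
  have hneCS : (C ∩ sphere (0:X) 1).Nonempty := ⟨e, he⟩
  obtain ⟨f, u, τ, hu, huτ, hCSf, hFrf⟩ := sep_package (hssp δ hδ0 hδ1) he
  have hfu : ∀ x ∈ C ∩ sphere (0:X) 1, u ≤ f x := fun x hx => le_trans huτ (hCSf x hx)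
  have hfpos : 0 < ‖f‖ := by
    have h1 := hfu e he
    have h2 : f e ≤ ‖f‖ * ‖e‖ := f_le_opNorm' f e
    rw [mem_sphere_zero_iff_norm.mp he.2, mul_one] at h2
    linarith
  have hx₀A : x₀ ∈ A := hx₀.1
  have h0C : (0:X) ∈ C := hC.2.1.subset rfl
  have hx₀min : ∀ a ∈ A, x₀ - a ∈ C → a = x₀ := (mem_minSet_iff h0C hx₀A).mp hx₀
  rw [Metric.mem_closure_iff]
  intro ε hε
  by_contra hcon
  push_neg at hcon
  -- the sequence of dilations
  set α₀ : ℝ := min δ (u / (4 * (‖f‖ + 1))) with hα₀def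
  have hα₀0 : 0 < α₀ := lt_min hδ0 (by positivity)
  have hα₀δ : α₀ ≤ δ := min_le_left _ _
  set αs : ℕ → ℝ := fun n => α₀ / (n + 1) with hαsdef
  have hαpos : ∀ n : ℕ, 0 < αs n := fun n => div_pos hα₀0 (by positivity)
  have hαle : ∀ n : ℕ, αs n ≤ α₀ := by
    intro n
    apply div_le_self hα₀0.le
    have : (0:ℝ) ≤ (n:ℝ) := Nat.cast_nonneg n
    linarith
  have hαδ : ∀ n, αs n ≤ δ := fun n => (hαle n).trans hα₀δ
  have hα1 : ∀ n, αs n < 1 := fun n => lt_of_le_of_lt (hαδ n) hδ1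
  have hαmono : ∀ m n : ℕ, m ≤ n → αs n ≤ αs m := by
    intro m n hmn
    have h1 : (0:ℝ) < (m:ℝ) + 1 := by positivity
    have h2 : (m:ℝ) + 1 ≤ (n:ℝ) + 1 := by exact_mod_cast Nat.succ_le_succ hmn
    exact div_le_div_of_nonneg_left hα₀0.le h1 h2
  have hαfa : ∀ n, ‖f‖ * αs n ≤ u / 2 := by
    intro n
    have h1 : αs n ≤ u / (4 * (‖f‖ + 1)) := (hαle n).trans (min_le_right _ _)
    have h1' : αs n * (4 * (‖f‖ + 1)) ≤ u := (le_div_iff₀ (by positivity)).mp h1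
    nlinarith [(hαpos n).le, norm_nonneg f]
  have hαfb : ∀ n, 2 * αs n * ‖f‖ ≤ u / 2 := by
    intro n
    have h1 : αs n ≤ u / (4 * (‖f‖ + 1)) := (hαle n).trans (min_le_right _ _)
    have h1' : αs n * (4 * (‖f‖ + 1)) ≤ u := (le_div_iff₀ (by positivity)).mp h1
    nlinarith [(hαpos n).le, norm_nonneg f]
  -- Step 1: for each n, produce a Henig proper efficient point in the section
  have key : ∀ n : ℕ, ∃ y, y ∈ B ∧ y ∈ GHe A C ∧ x₀ - y ∈ epsCone C (αs n) := by
    intro n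
    obtain ⟨g, β, hβ, hint, hsubeps⟩ :=
      exists_dilating hC (hαpos n) (hssp (αs n) (hαpos n) (hα1 n)) he
    have hKcl : IsClosed (BPCone g β) := isClosed_BPCone g β
    have hKconv : Convex ℝ (BPCone g β) := convex_BPCone g hβ.le
    have h0K : (0:X) ∈ BPCone g β := zero_mem_BPCone g β
    have hx₀B : x₀ ∈ B := by
      refine ⟨hx₀A, mem_singleton_sub.mpr ?_⟩
      rw [sub_self]
      exact zero_mem_epsCone he hδ0.le
    have hZne : (B ∩ (({x₀} : Set X) - BPCone g β)).Nonempty :=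
      ⟨x₀, hx₀B, mem_singleton_sub.mpr (by rw [sub_self]; exact h0K)⟩
    obtain ⟨y, ⟨hyB, hyK⟩, hymin⟩ :=
      exists_min_on_weak hBcpt (convex_singleton_sub hKconv x₀)
        (isClosed_singleton_sub hKcl x₀) hZne g
    have hx₀y : x₀ - y ∈ BPCone g β := mem_singleton_sub.mp hyK
    refine ⟨y, hyB, ⟨BPCone g β, isCone_BPCone g β, coneConvex_BPCone g hβ.le, hint, ?_⟩,
      hsubeps hx₀y⟩
    rw [mem_minSet_iff h0K hyB.1]  -- need hyB.1 : y ∈ A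
    · intro a ha hya
      have hx₀a : x₀ - a ∈ BPCone g β := by
        have hmem : (x₀ - y) + (y - a) ∈ BPCone g β + BPCone g β :=
          Set.add_mem_add hx₀y hya
        rw [coneConvex_BPCone g hβ.le] at hmem
        have heq : (x₀ - y) + (y - a) = x₀ - a := by abel
        rwa [heq] at hmem
      have haB : a ∈ B :=
        ⟨ha, mem_singleton_sub.mpr (epsCone_mono C (hαδ n) (hsubeps hx₀a))⟩
      have haZ : a ∈ B ∩ (({x₀} : Set X) - BPCone g β) :=
        ⟨haB, mem_singleton_sub.mpr hx₀a⟩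
      have hga : g y ≤ g a := hymin a haZ
      have hya' : β * ‖y - a‖ ≤ g (y - a) := hya
      rw [map_sub] at hya'
      have hna : ‖y - a‖ ≤ 0 := by nlinarith [norm_nonneg (y - a)]
      have : y - a = 0 := norm_le_zero_iff.mp hna
      have : y = a := by
        have := sub_eq_zero.mp this
        exact this
      exact this.symm
  -- Step 2: contradiction via weak compactness
  set θ : ℝ := u / 4 * ε with hθdef
  have hθ0 : 0 < θ := by positivity
  set Gs : ℕ → Set X := fun n =>
    {y : X | θ ≤ f (x₀ - y)} ∩
      (({x₀} : Set X) - closure (convexHull ℝ (epsCone C (αs n)))) with hGsdef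
  have hhalfconv : Convex ℝ {y : X | θ ≤ f (x₀ - y)} := by
    have heq : {y : X | θ ≤ f (x₀ - y)} = {y : X | f y ≤ f x₀ - θ} := by
      ext y
      simp only [Set.mem_setOf_eq, map_sub]
      constructor <;> intro <;> linarith
    rw [heq]
    exact convex_halfSpace_le ⟨f.map_add, fun c x => f.map_smul c x⟩ _
  have hhalfcl : IsClosed {y : X | θ ≤ f (x₀ - y)} :=
    isClosed_le continuous_const (f.continuous.comp (continuous_const.sub continuous_id))
  have hGconv : ∀ n, Convex ℝ (Gs n) := fun n =>
    hhalfconv.inter (convex_singleton_sub ((convex_convexHull ℝ _).closure) x₀)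
  have hGcl : ∀ n, IsClosed (Gs n) := fun n =>
    hhalfcl.inter (isClosed_singleton_sub isClosed_closure x₀)
  have hGanti : ∀ m n : ℕ, m ≤ n → Gs n ⊆ Gs m := by
    intro m n hmn
    rintro y ⟨h1, h2⟩
    refine ⟨h1, ?_⟩
    rw [mem_singleton_sub] at h2 ⊢
    exact closure_mono (convexHull_mono (epsCone_mono C (hαmono m n hmn))) h2
  have hTne : ∀ n, ∃ y, y ∈ B ∧ y ∈ Gs n := by
    intro n
    obtain ⟨y, hyB, hyG, hyeps⟩ := key n
    refine ⟨y, hyB, ?_, mem_singleton_sub.mpr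
      (subset_closure (subset_convexHull ℝ _ hyeps))⟩
    have hdist : ε ≤ dist x₀ y := hcon y hyG
    rw [dist_eq_norm] at hdist
    have hlb := f_lb hu hfu hneCS (hαpos n).le (hα1 n).le (hαfa n) _ hyeps
    show θ ≤ f (x₀ - y)
    calc θ = u / 4 * ε := rfl
      _ ≤ u / 4 * ‖x₀ - y‖ := by
          apply mul_le_mul_of_nonneg_left hdist
          linarith
      _ ≤ f (x₀ - y) := hlb
  have hiter : ((toWeakSpace ℝ X '' B) ∩ ⋂ n : ℕ, toWeakSpace ℝ X '' (Gs n)).Nonempty := by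
    apply hBcpt.inter_iInter_nonempty
    · intro n
      exact isClosed_weak_image (hGconv n) (hGcl n)
    · intro v
      obtain ⟨y, hyB, hyG⟩ := hTne (v.sup id)
      refine ⟨toWeakSpace ℝ X y, Set.mem_image_of_mem _ hyB, ?_⟩
      apply Set.mem_iInter₂.mpr
      intro i hi
      exact Set.mem_image_of_mem _ (hGanti i (v.sup id) (Finset.le_sup (f := id) hi) hyG)
  obtain ⟨w, hwB, hwG⟩ := hiter
  obtain ⟨y, hyB, rfl⟩ := hwB
  have hyG : ∀ n : ℕ, y ∈ Gs n := by
    intro n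
    obtain ⟨z, hz, hzeq⟩ := Set.mem_iInter.mp hwG n
    exact (toWeakSpace ℝ X).injective hzeq ▸ hz
  have hθy : θ ≤ f (x₀ - y) := (hyG 0).1
  have hmemC : x₀ - y ∈ C := by
    have hCne : C.Nonempty := ⟨e, he.1⟩
    have hbnd : ∀ n : ℕ, infDist (x₀ - y) C ≤ 4 * ‖f‖ / u * αs n * ‖x₀ - y‖ := by
      intro n
      exact hull_bound hC.1 hconv hu hfu hneCS (hαpos n) (hαfb n) _
        (mem_singleton_sub.mp (hyG n).2)
    rw [hcl.mem_iff_infDist_zero hCne]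
    by_contra hne0
    have hd : 0 < infDist (x₀ - y) C := lt_of_le_of_ne infDist_nonneg (Ne.symm hne0)
    set M : ℝ := 4 * ‖f‖ / u * ‖x₀ - y‖ with hMdef
    have hM0 : 0 ≤ M := by positivity
    obtain ⟨n, hn⟩ := exists_nat_gt (M * α₀ / infDist (x₀ - y) C)
    have h1 : infDist (x₀ - y) C ≤ M * α₀ / (n + 1) := by
      have hb := hbnd n
      calc infDist (x₀ - y) C ≤ 4 * ‖f‖ / u * (α₀ / (n + 1)) * ‖x₀ - y‖ := hb
        _ = M * α₀ / (n + 1) := by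
            rw [hMdef]
            field_simp
    have h2 : M * α₀ / infDist (x₀ - y) C < n := hn
    have hn1 : (0:ℝ) < (n:ℝ) + 1 := by positivity
    rw [div_lt_iff₀ hd] at h2
    rw [le_div_iff₀ hn1] at h1
    nlinarith
  have hyx₀ : y = x₀ := hx₀min y hyB.1 hmemC
  rw [hyx₀, sub_self, map_zero] at hθy
  linarith
end
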